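/- arXiv:1208.4818 — 3 statements merged into one kernel-verified Lean document; each statement's English description precedes it below -/
import Mathlib

section
/- Multiplying the MJP path density p(s₀,S,T) = π₀(s₀)(∏_{i=1}^n A_{s_i s_{i-1}}) exp(-∫_{t_start}^{t_end} |A_{S(t)}| dt) by the inhomogeneous-Poisson density of the auxiliary virtual jumps p(U_T | s₀,S,T) = (∏_{i=0}^n (Ω + A_{s_i s_i})^{|U_i|}) exp(-∫ (Ω + A_{S(t) S(t)}) dt) yields exactly the uniformized density p(v₀,V,W) = e^{-Ω(t_end - t_start)} π₀(v₀) ∏_{i=1}^{|V|} (Ω + A_{v_i v_i})^{1(v_i = v_{i-1})} A_{v_i v_{i-1}}^{1(v_i ≠ v_{i-1})}, whenever (v₀,V,W) is the compatible augmentation of (s₀,S,T) by U. -/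
open Matrix

/-! Since the diagonal of `A` is nonpositive, `|A_{ss}| + (Ω + A_{ss}) = Ω` in every holding
interval, so the two exponential factors combine to `e^{-Ω (t_end - t_start)}`; the remaining
factors are the same products, merely regrouped. -/

theorem Real.exp_neg_sum_abs_mul_mul_exp_neg_sum_add_mul {ι : Type*} (I : Finset ι)
    (a τ : ι → ℝ) (Ω : ℝ) (ha : ∀ i ∈ I, a i ≤ 0) :
    Real.exp (-∑ i ∈ I, |a i| * τ i) * Real.exp (-∑ i ∈ I, (Ω + a i) * τ i)
      = Real.exp (-Ω * ∑ i ∈ I, τ i) := by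
  rw [← Real.exp_add, neg_mul, ← neg_add, ← Finset.sum_add_distrib, Finset.mul_sum]
  congr 2
  refine Finset.sum_congr rfl fun i hi => ?_
  rw [abs_of_nonpos (ha i hi)]
  ring

theorem mjp_times_virtual_jump_density_eq_uniformized_general (N : ℕ)
    (A : Matrix (Fin N) (Fin N) ℝ) (Ω : ℝ)
    (hdiag : ∀ s, A s s ≤ 0)
    (π₀ : Fin N → ℝ) (n : ℕ) (s : Fin (n + 1) → Fin N)
    (τ : Fin (n + 1) → ℝ)
    (tstart tend : ℝ) (hsum : ∑ i, τ i = tend - tstart)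
    (u : Fin (n + 1) → ℕ) :
    (π₀ (s 0) * (∏ i : Fin n, A (s i.succ) (s i.castSucc)) *
        Real.exp (-∑ i, |A (s i) (s i)| * τ i)) *
      ((∏ i, (Ω + A (s i) (s i)) ^ u i) *
        Real.exp (-∑ i, (Ω + A (s i) (s i)) * τ i))
      = Real.exp (-Ω * (tend - tstart)) * π₀ (s 0) *
          (∏ i, (Ω + A (s i) (s i)) ^ u i) *
          ∏ i : Fin n, A (s i.succ) (s i.castSucc) := by
  have hexp := Real.exp_neg_sum_abs_mul_mul_exp_neg_sum_add_mul Finset.univ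
    (fun i => A (s i) (s i)) τ Ω fun i _ => hdiag (s i)
  rw [hsum] at hexp
  rw [← hexp]
  ring

/-- Multiplying the MJP path density
`π₀(s₀) (∏ᵢ A_{sᵢ sᵢ₋₁}) exp(-∑ᵢ |A_{sᵢsᵢ}| τᵢ)` (with holding times `τᵢ`, so that the exponent
is `-∫ |A_{S(t)}| dt`) by the inhomogeneous-Poisson density of the virtual jumps
`(∏ᵢ (Ω + A_{sᵢsᵢ})^{|Uᵢ|}) exp(-∑ᵢ (Ω + A_{sᵢsᵢ}) τᵢ)` yields exactly the uniformized density
`e^{-Ω(t_end - t_start)} π₀(s₀) ∏ᵢ (Ω + A_{sᵢsᵢ})^{|Uᵢ|} ∏ᵢ A_{sᵢ sᵢ₋₁}`: the value of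
`p(v₀,V,W)` at the compatible augmentation `(v₀,V,W)` of `(s₀,S,T)` by `U`, in which self-jumps
in the `i`-th holding interval each contribute `Ω + A_{sᵢsᵢ}` and real jumps contribute
`A_{sᵢ sᵢ₋₁}`. -/
theorem mjp_times_virtual_jump_density_eq_uniformized (N : ℕ)
    (A : Matrix (Fin N) (Fin N) ℝ) (Ω : ℝ)
    (hdiag : ∀ s, A s s ≤ 0) (hΩ : ∀ s, |A s s| ≤ Ω)
    (π₀ : Fin N → ℝ) (n : ℕ) (s : Fin (n + 1) → Fin N)
    (τ : Fin (n + 1) → ℝ) (hτ : ∀ i, 0 ≤ τ i)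
    (tstart tend : ℝ) (hsum : ∑ i, τ i = tend - tstart)
    (u : Fin (n + 1) → ℕ) :
    (π₀ (s 0) * (∏ i : Fin n, A (s i.succ) (s i.castSucc)) *
        Real.exp (-∑ i, |A (s i) (s i)| * τ i)) *
      ((∏ i, (Ω + A (s i) (s i)) ^ u i) *
        Real.exp (-∑ i, (Ω + A (s i) (s i)) * τ i))
      = Real.exp (-Ω * (tend - tstart)) * π₀ (s 0) *
          (∏ i, (Ω + A (s i) (s i)) ^ u i) *
          ∏ i : Fin n, A (s i.succ) (s i.castSucc) :=
  mjp_times_virtual_jump_density_eq_uniformized_general N A Ω hdiag π₀ n s τ tstart tend hsum u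
end

section
/- Marginalizing self-transitions recovers the MJP density: for a fixed jump skeleton (s₀,S,T) with n jumps and holding interval lengths τ_0,…,τ_n, summing the uniformized density p(v₀,V,W) over all numbers and positions of self-transitions (integrating each |U_i| ≥ 0 virtual jump times over the i-th interval with density (Ω + A_{s_i s_i})^{|U_i|} τ_i^{|U_i|}/|U_i|! pattern) yields π₀(s₀)(∏_{i=1}^n A_{s_i s_{i-1}}) exp(-∑_{i=0}^n |A_{s_i s_i}| τ_i). -/
/-!
The summand factors over the intervals, so by absolute convergence the sum over all tuples
`u` of virtual-jump counts is the product over `i` of the exponential series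
`∑ₖ ((Ω + A_{sᵢsᵢ}) τᵢ)ᵏ / k! = exp ((Ω + A_{sᵢsᵢ}) τᵢ)`. Since `∑ τᵢ = tend - tstart`, the
`Ω`-terms cancel against the prefactor `exp (-Ω (tend - tstart))`, and `A_{sᵢsᵢ} = -|A_{sᵢsᵢ}|`.
-/

open Matrix

section PiProduct

variable {R κ : Type*} [NormedCommRing R] [CompleteSpace R]

theorem summable_norm_and_hasSum_prod_pi {m : ℕ} (f : Fin m → κ → R)
    (hf : ∀ i, Summable fun k => ‖f i k‖) :
    (Summable fun u : Fin m → κ => ‖∏ i, f i (u i)‖) ∧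
      HasSum (fun u : Fin m → κ => ∏ i, f i (u i)) (∏ i, ∑' k, f i k) := by
  induction m with
  | zero => exact ⟨.of_finite, by simp⟩
  | succ m ih =>
    obtain ⟨hnorm, hsum⟩ := ih (fun i => f i.succ) (fun i => hf i.succ)
    have hprod_norm := (hf 0).mul_norm hnorm
    have hprod := ((hf 0).of_norm.hasSum).mul hsum hprod_norm.of_norm
    let e := (Fin.consEquiv fun _ : Fin (m + 1) => κ).symm
    have he : ∀ u : Fin (m + 1) → κ,
        f 0 (e u).1 * ∏ i : Fin m, f i.succ ((e u).2 i) = ∏ i, f i (u i) := fun u => by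
      simp [e, Fin.prod_univ_succ, Fin.tail]
    rw [Fin.prod_univ_succ]
    refine ⟨?_, ?_⟩
    · simpa only [Function.comp_def, he] using e.summable_iff.mpr hprod_norm
    · simpa only [Function.comp_def, he] using e.hasSum_iff.mpr hprod

end PiProduct

theorem hasSum_prod_pow_div_factorial {m : ℕ} (x : Fin m → ℝ) :
    HasSum (fun u : Fin m → ℕ => ∏ i, x i ^ u i / (u i).factorial) (Real.exp (∑ i, x i)) := by
  have hexp : ∀ t : ℝ, ∑' k : ℕ, t ^ k / (k.factorial : ℝ) = Real.exp t := fun t => by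
    rw [Real.exp_eq_exp_ℝ, NormedSpace.exp_eq_tsum_div]
  have h := (summable_norm_and_hasSum_prod_pi (fun i k => x i ^ k / (k.factorial : ℝ))
    fun i => by simpa [abs_div, abs_pow] using Real.summable_pow_div_factorial |x i|).2
  rwa [Finset.prod_congr rfl fun i _ => hexp (x i), ← Real.exp_sum] at h

theorem marginalizing_virtual_jumps_general (N : ℕ)
    (A : Matrix (Fin N) (Fin N) ℝ) (Ω : ℝ)
    (hdiag : ∀ s, A s s ≤ 0)
    (π₀ : Fin N → ℝ) (n : ℕ) (s : Fin (n + 1) → Fin N)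
    (τ : Fin (n + 1) → ℝ)
    (tstart tend : ℝ) (hsum : ∑ i, τ i = tend - tstart) :
    ∑' u : Fin (n + 1) → ℕ,
        (Real.exp (-Ω * (tend - tstart)) * π₀ (s 0) *
          (∏ i : Fin n, A (s i.succ) (s i.castSucc)) *
          ∏ i, ((Ω + A (s i) (s i)) * τ i) ^ u i / (u i).factorial)
      = π₀ (s 0) * (∏ i : Fin n, A (s i.succ) (s i.castSucc)) *
          Real.exp (-∑ i, |A (s i) (s i)| * τ i) := by
  rw [tsum_mul_left, (hasSum_prod_pow_div_factorial _).tsum_eq]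
  have hexponent : -Ω * (tend - tstart) + ∑ i, (Ω + A (s i) (s i)) * τ i
      = -∑ i, |A (s i) (s i)| * τ i := by
    simp only [abs_of_nonpos (hdiag _), ← hsum, Finset.mul_sum, ← Finset.sum_neg_distrib,
      ← Finset.sum_add_distrib]
    exact Finset.sum_congr rfl fun i _ => by ring
  rw [← hexponent, Real.exp_add]
  ring

/-- Marginalizing self-transitions recovers the MJP density: for a fixed jump skeleton with
states `sᵢ` and holding interval lengths `τᵢ`, summing the uniformized density over the numbers
`uᵢ` of virtual jumps in each interval -- each placement of `uᵢ` unordered virtual jumps in an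
interval of length `τᵢ` having integrated density `((Ω + A_{sᵢsᵢ}) τᵢ)^{uᵢ}/uᵢ!` -- yields
`π₀(s₀) (∏ᵢ A_{sᵢ sᵢ₋₁}) exp(-∑ᵢ |A_{sᵢsᵢ}| τᵢ)`. -/
theorem marginalizing_virtual_jumps (N : ℕ)
    (A : Matrix (Fin N) (Fin N) ℝ) (Ω : ℝ)
    (hdiag : ∀ s, A s s ≤ 0) (hΩ : ∀ s, |A s s| ≤ Ω)
    (π₀ : Fin N → ℝ) (n : ℕ) (s : Fin (n + 1) → Fin N)
    (τ : Fin (n + 1) → ℝ) (hτ : ∀ i, 0 ≤ τ i)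
    (tstart tend : ℝ) (hsum : ∑ i, τ i = tend - tstart) :
    ∑' u : Fin (n + 1) → ℕ,
        (Real.exp (-Ω * (tend - tstart)) * π₀ (s 0) *
          (∏ i : Fin n, A (s i.succ) (s i.castSucc)) *
          ∏ i, ((Ω + A (s i) (s i)) * τ i) ^ u i / (u i).factorial)
      = π₀ (s 0) * (∏ i : Fin n, A (s i.succ) (s i.castSucc)) *
          Real.exp (-∑ i, |A (s i) (s i)| * τ i) :=
  marginalizing_virtual_jumps_general N A Ω hdiag π₀ n s τ tstart tend hsum
end

section
/- Backward sampling correctness: in a hidden Markov model, the conditional probability satisfies P(S_t = s | S_{t+1} = s', O^0,…,O^T) ∝ α^t(s) B^t_{s's} L^t(s), where α^t is the forward filtering vector; hence sampling S_T ∝ L^T(s)α^T(s) and then S_t backwards via this kernel yields an exact sample from the joint posterior P(S_0,…,S_T | O^0,…,O^T). -/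
/-!
Write `w_t(f) = π₀(f₀) ∏_{j<t} L_j(f_j) B_j(f_{j+1}, f_j)` for the weight of a path prefix. The
forward recursion says exactly that `α_t(s)` is the total weight of the prefixes ending in `s`.
Pinning `S_i = s, S_{i+1} = s'` splits every full path into a prefix ending in `s`, the factor
`L_i(s) B_i(s', s)`, and a suffix starting in `s'`; summing out the prefix gives `α_i(s)` and
summing out the suffix gives a function of `s'` alone. For the sampler, the recursion turns the
normaliser of the step-`i` kernel into `α_{i+1}(f_{i+1})`, so the product of the kernels
telescopes to `w_T(f) / α_T(f_T)`, and the first factor `L_T α_T / ∑ L_T α_T` completes it to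
`w_T(f) L_T(f_T)` over its total.
-/

open Finset

theorem Fin.sum_univ_fun_snoc {β M : Type*} [Fintype β] [AddCommMonoid M] {n : ℕ}
    (F : (Fin (n + 1) → β) → M) :
    ∑ f, F f = ∑ s, ∑ f : Fin n → β, F (Fin.snoc f s) := by
  rw [← Fintype.sum_prod_type']
  exact (Fintype.sum_equiv (Fin.snocEquiv fun _ => β) _ _ fun _ => rfl).symm

namespace HMM

variable {N : ℕ} {π₀ : Fin N → ℝ} {B : ℕ → Matrix (Fin N) (Fin N) ℝ} {L : ℕ → Fin N → ℝ}
  {α : ℕ → Fin N → ℝ}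

variable (π₀ B L) in
/-- `P(S_0 … S_t = f, O^0 … O^{t-1})`: the likelihood of the last state is left out. -/
def pathWeight (t : ℕ) (f : Fin (t + 1) → Fin N) : ℝ :=
  π₀ (f 0) * ∏ j : Fin t, L j (f j.castSucc) * B j (f j.succ) (f j.castSucc)

lemma pathWeight_succ (t : ℕ) (f : Fin (t + 2) → Fin N) :
    pathWeight π₀ B L (t + 1) f = pathWeight π₀ B L t (Fin.init f) *
      (L t (f (Fin.last t).castSucc) * B t (f (Fin.last (t + 1))) (f (Fin.last t).castSucc)) := by
  simp only [pathWeight, Fin.prod_univ_castSucc, Fin.init, Fin.succ_castSucc, Fin.succ_last,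
    Fin.val_castSucc, Fin.val_last, mul_assoc]
  rfl

lemma pathWeight_mul_eq (T : ℕ) (f : Fin (T + 1) → Fin N) :
    pathWeight π₀ B L T f * L T (f (Fin.last T)) =
      π₀ (f 0) * (∏ j : Fin T, B j (f j.succ) (f j.castSucc)) * ∏ t : Fin (T + 1), L t (f t) := by
  rw [pathWeight, Fin.prod_univ_castSucc (f := fun t : Fin (T + 1) => L t (f t)),
    Finset.prod_mul_distrib]
  simp only [Fin.val_castSucc, Fin.val_last]
  ring

lemma sum_pathWeight_mul (hα0 : ∀ s, α 0 s = π₀ s)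
    (hrec : ∀ t s', α (t + 1) s' = ∑ s, α t s * L t s * B t s' s) (t : ℕ) (g : Fin N → ℝ) :
    ∑ f : Fin (t + 1) → Fin N, pathWeight π₀ B L t f * g (f (Fin.last t)) = ∑ s, α t s * g s := by
  induction t generalizing g with
  | zero =>
    refine Fintype.sum_equiv (Equiv.funUnique (Fin 1) (Fin N)) _ _ fun f => ?_
    simp [pathWeight, hα0]
  | succ t ih =>
    rw [Fin.sum_univ_fun_snoc]
    simp only [pathWeight_succ, Fin.init_snoc, Fin.snoc_castSucc, Fin.snoc_last]
    refine Finset.sum_congr rfl fun s' _ => ?_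
    calc ∑ f : Fin (t + 1) → Fin N, pathWeight π₀ B L t f *
          (L t (f (Fin.last t)) * B t s' (f (Fin.last t))) * g s'
        = ∑ s, α t s * (L t s * B t s' s * g s') := by
          rw [← ih]; simp only [mul_assoc]
      _ = α (t + 1) s' * g s' := by
          rw [hrec, Finset.sum_mul]; simp only [mul_assoc]

lemma exists_sum_pathWeight_pinned (hα0 : ∀ s, α 0 s = π₀ s)
    (hrec : ∀ t s', α (t + 1) s' = ∑ s, α t s * L t s * B t s' s) (T : ℕ) (g : Fin N → ℝ)
    (i : Fin T) :
    ∃ γ : Fin N → ℝ, ∀ s s' : Fin N,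
      (∑ f : Fin (T + 1) → Fin N,
        if f i.castSucc = s ∧ f i.succ = s' then pathWeight π₀ B L T f * g (f (Fin.last T))
        else 0) = α i s * L i s * B i s' s * γ s' := by
  -- Peel off the last state; the terminal weight `g` absorbs the transition into it.
  induction T generalizing g with
  | zero => exact i.elim0
  | succ T ih =>
    induction i using Fin.lastCases with
    | last =>
      refine ⟨g, fun s s' => ?_⟩
      rw [Fin.sum_univ_fun_snoc]
      simp only [pathWeight_succ, Fin.init_snoc, Fin.snoc_castSucc, Fin.snoc_last, Fin.succ_last]
      have h := sum_pathWeight_mul hα0 hrec T fun x => if x = s then L T x * B T s' x * g s' else 0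
      simp only [mul_ite, mul_zero, Finset.sum_ite_eq', Finset.mem_univ, if_true] at h
      rw [Fintype.sum_eq_single s' fun s'' h => by simp [h]]
      simpa only [and_true, Fin.val_last, mul_assoc] using h
    | cast i =>
      obtain ⟨γ, hγ⟩ := ih (fun x => ∑ s'', L T x * B T s'' x * g s'') i
      refine ⟨γ, fun s s' => ?_⟩
      rw [Fin.sum_univ_fun_snoc, Finset.sum_comm]
      simp only [pathWeight_succ, Fin.init_snoc, Fin.snoc_castSucc, Fin.snoc_last,
        Fin.succ_castSucc]
      rw [Fin.val_castSucc, ← hγ]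
      refine Finset.sum_congr rfl fun f _ => ?_
      split_ifs
      · rw [Finset.mul_sum]; simp only [mul_assoc]
      · simp

lemma forward_pos (hα0 : ∀ s, α 0 s = π₀ s)
    (hrec : ∀ t s', α (t + 1) s' = ∑ s, α t s * L t s * B t s' s) (hπ : ∀ s, 0 < π₀ s)
    (hB : ∀ t s s', 0 < B t s' s) (hL : ∀ t s, 0 < L t s) (t : ℕ) (s : Fin N) : 0 < α t s := by
  induction t generalizing s with
  | zero => exact hα0 s ▸ hπ s
  | succ t ih =>
    have : Nonempty (Fin N) := ⟨s⟩
    rw [hrec]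
    exact Finset.sum_pos (fun x _ => mul_pos (mul_pos (ih x) (hL t x)) (hB t x s)) univ_nonempty

lemma prod_kernel_eq_pathWeight_div (hα0 : ∀ s, α 0 s = π₀ s)
    (hrec : ∀ t s', α (t + 1) s' = ∑ s, α t s * L t s * B t s' s) (hα : ∀ t s, α t s ≠ 0)
    (T : ℕ) (f : Fin (T + 1) → Fin N) :
    ∏ i : Fin T, (α i (f i.castSucc) * B i (f i.succ) (f i.castSucc) * L i (f i.castSucc) /
        ∑ s, α i s * B i (f i.succ) s * L i s) =
      pathWeight π₀ B L T f / α T (f (Fin.last T)) := by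
  induction T with
  | zero =>
    have h0 := hα 0 (f 0)
    rw [hα0] at h0
    simp [pathWeight, hα0, h0]
  | succ T ih =>
    have hden : ∑ s, α T s * B T (f (Fin.last (T + 1))) s * L T s =
        α (T + 1) (f (Fin.last (T + 1))) := by
      rw [hrec]; simp only [mul_right_comm]
    have := ih (Fin.init f)
    simp only [Fin.init] at this
    rw [Fin.prod_univ_castSucc, pathWeight_succ]
    simp only [Fin.succ_castSucc, Fin.val_castSucc, Fin.succ_last, Fin.val_last, this, hden]
    have hT := hα T (f (Fin.last T).castSucc)
    field_simp

end HMM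

open HMM in
/-- Backward sampling correctness for HMMs. With joint weight
`w(f) = π₀(f₀) ∏ᵢ B i (f_{i+1}) (f_i) ∏_t L t (f_t)` (the probability of the hidden path `f`
together with all observations `O⁰,…,O^T`), and forward vectors `α` as in forward filtering:
(1) for each `t < T`, `P(S_t = s, S_{t+1} = s', O⁰,…,O^T) = α t s · L t s · B t s' s · γ(s')`
for some `γ` not depending on `s`, so `P(S_t = s | S_{t+1} = s', O) ∝ α t s · B t s' s · L t s`;
(2) sampling `S_T ∝ L T s · α T s` and then each `S_t` backwards via this normalized kernel
yields exactly the joint posterior `w(f)/∑_g w(g)`. -/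
theorem hmm_backward_sampling (N T : ℕ) (π₀ : Fin N → ℝ)
    (B : ℕ → Matrix (Fin N) (Fin N) ℝ) (L : ℕ → Fin N → ℝ)
    (α : ℕ → Fin N → ℝ)
    (hα0 : ∀ s, α 0 s = π₀ s)
    (hrec : ∀ t s', α (t + 1) s' = ∑ s, α t s * L t s * B t s' s)
    (hπ : ∀ s, 0 < π₀ s) (hB : ∀ t s s', 0 < B t s' s) (hL : ∀ t s, 0 < L t s) :
    (∀ i : Fin T, ∃ γ : Fin N → ℝ, ∀ s s' : Fin N,
        (∑ f : Fin (T + 1) → Fin N,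
          if f i.castSucc = s ∧ f i.succ = s' then
            π₀ (f 0) * (∏ j : Fin T, B j (f j.succ) (f j.castSucc)) *
              ∏ t : Fin (T + 1), L t (f t)
          else 0)
        = α i s * L i s * B i s' s * γ s') ∧
    (∀ f : Fin (T + 1) → Fin N,
        (L T (f (Fin.last T)) * α T (f (Fin.last T)) / ∑ s, L T s * α T s) *
          ∏ i : Fin T,
            (α i (f i.castSucc) * B i (f i.succ) (f i.castSucc) * L i (f i.castSucc) /
              ∑ s, α i s * B i (f i.succ) s * L i s)
        = (π₀ (f 0) * (∏ j : Fin T, B j (f j.succ) (f j.castSucc)) *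
            ∏ t : Fin (T + 1), L t (f t)) /
          ∑ g : Fin (T + 1) → Fin N,
            π₀ (g 0) * (∏ j : Fin T, B j (g j.succ) (g j.castSucc)) *
              ∏ t : Fin (T + 1), L t (g t)) := by
  simp only [← pathWeight_mul_eq]
  refine ⟨exists_sum_pathWeight_pinned hα0 hrec T (L T), fun f => ?_⟩
  have hα := forward_pos hα0 hrec hπ hB hL
  have hZ : ∑ g, pathWeight π₀ B L T g * L T (g (Fin.last T)) = ∑ s, L T s * α T s := by
    rw [sum_pathWeight_mul hα0 hrec]
    simp only [mul_comm]
  have : Nonempty (Fin N) := ⟨f 0⟩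
  have hZpos : 0 < ∑ s, L T s * α T s :=
    Finset.sum_pos (fun s _ => mul_pos (hL T s) (hα T s)) univ_nonempty
  have hαf := (hα T (f (Fin.last T))).ne'
  rw [prod_kernel_eq_pathWeight_div hα0 hrec (fun t s => (hα t s).ne'), hZ]
  field_simp
end
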